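/- arXiv:2602.17945 — 2 statements merged into one kernel-verified Lean document; each statement's English description precedes it below -/
import Mathlib

section
/- In the odd-case algebra of integrals, the functions L_i = (F_{i+1}G_{m−i} − CH)/(F_{i+1}G_{m−i−1} + CH) pairwise commute: {L_i, L_j} = 0 for all i, j, and the only non-vanishing brackets between the F's and L's are {F_{j+1}, L_j} = −F_{j+1} L_j for j = 1,...,m−3. -/
noncomputable def pd {n : ℕ} (i : Fin n) (f : (Fin n → ℝ) → ℝ) (x : Fin n → ℝ) : ℝ :=
  fderiv ℝ f x (Pi.single i 1)

noncomputable def pb {n : ℕ} (P : Fin n → Fin n → (Fin n → ℝ) → ℝ)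
    (f g : (Fin n → ℝ) → ℝ) (x : Fin n → ℝ) : ℝ :=
  ∑ i : Fin n, ∑ j : Fin n, P i j x * pd i f x * pd j g x

def get {n : ℕ} (x : Fin n → ℝ) (i : ℕ) : ℝ := if h : i < n then x ⟨i, h⟩ else 0

/- Abstract odd-case algebra of integrals: `2m-2` independent variables,
coordinate `0` is `H`, coordinate `1` is `C`, coordinates `2,…,m-1` are
`F_2,…,F_{m-1}`, and coordinates `m,…,2m-3` are `G_2,…,G_{m-1}`
(`G_j` at index `(m-2)+j`). -/

/-- The value of the bracket `{F_i, G_j}` in the odd case: `0` if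
`κ = i+j-m-1 < 0`, and otherwise
`-∏_{l=0}^{κ}(F_{i-κ+l} G_{j-l} - CH) / ∏_{l=1}^{κ}(F_{i-κ+l-1} G_{j-l} + CH)`. -/
noncomputable def poFG (m i j : ℕ) (y : Fin (2*m-2) → ℝ) : ℝ :=
  if i + j < m + 1 then 0
  else
    -((∏ l ∈ Finset.range ((i+j-(m+1))+1),
        (get y (i-(i+j-(m+1))+l) * get y ((m-2)+(j-l)) - get y 1 * get y 0)) /
      (∏ l ∈ Finset.Icc 1 (i+j-(m+1)),
        (get y (i-(i+j-(m+1))+l-1) * get y ((m-2)+(j-l)) + get y 1 * get y 0)))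

/-- The odd-case structure matrix: `H` and `C` are Casimirs,
`{F_i,F_j} = {G_i,G_j} = 0`, and `{F_i,G_j}` as in `poFG`, extended
antisymmetrically. -/
noncomputable def Podd (m : ℕ) : Fin (2*m-2) → Fin (2*m-2) → (Fin (2*m-2) → ℝ) → ℝ :=
  fun a b y =>
    if 2 ≤ (a:ℕ) ∧ (a:ℕ) ≤ m-1 ∧ m ≤ (b:ℕ) then poFG m (a:ℕ) ((b:ℕ)-(m-2)) y
    else if 2 ≤ (b:ℕ) ∧ (b:ℕ) ≤ m-1 ∧ m ≤ (a:ℕ) then -(poFG m (b:ℕ) ((a:ℕ)-(m-2)) y)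
    else 0

/-- `L_k = (F_{k+1} G_{m-k} - CH)/(F_{k+1} G_{m-k-1} + CH)`. -/
noncomputable def Lfun (m k : ℕ) : (Fin (2*m-2) → ℝ) → ℝ := fun y =>
  (get y (k+1) * get y ((m-2)+(m-k)) - get y 1 * get y 0) /
  (get y (k+1) * get y ((m-2)+(m-k-1)) + get y 1 * get y 0)

/-! ### Basic facts about the partial derivatives `pd` -/

section basic
variable {n : ℕ} {f g : (Fin n → ℝ) → ℝ} {x : Fin n → ℝ} {a : Fin n}

lemma diffAt_get (i : ℕ) (x : Fin n → ℝ) :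
    DifferentiableAt ℝ (fun y : Fin n → ℝ => get y i) x := by
  unfold _root_.get
  by_cases h : i < n
  · simp only [dif_pos h]
    exact (ContinuousLinearMap.proj (R := ℝ) (φ := fun _ : Fin n => ℝ)
      (⟨i, h⟩ : Fin n)).differentiableAt
  · simp only [dif_neg h]
    exact differentiableAt_const 0

lemma pd_get (i : ℕ) (a : Fin n) (x : Fin n → ℝ) :
    pd a (fun y => get y i) x = if (a : ℕ) = i then 1 else 0 := by
  unfold pd _root_.get
  by_cases h : i < n
  · simp only [dif_pos h]
    have h1 : fderiv ℝ (fun y : Fin n → ℝ => y ⟨i, h⟩) x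
        = ContinuousLinearMap.proj (R := ℝ) (φ := fun _ : Fin n => ℝ) ⟨i, h⟩ :=
      (ContinuousLinearMap.proj (R := ℝ) (φ := fun _ : Fin n => ℝ)
        (⟨i, h⟩ : Fin n)).fderiv
    rw [h1]
    simp only [ContinuousLinearMap.proj_apply, Pi.single_apply]
    by_cases hai : (⟨i, h⟩ : Fin n) = a
    · simp [hai, (Fin.ext_iff.mp hai).symm]
    · have : ¬ ((a : ℕ) = i) := fun hc => hai (Fin.ext hc.symm)
      simp [hai, this]
  · simp only [dif_neg h]
    rw [fderiv_fun_const]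
    have : ¬ ((a : ℕ) = i) := by have := a.isLt; omega
    simp [this]

lemma pd_mul (hf : DifferentiableAt ℝ f x) (hg : DifferentiableAt ℝ g x) :
    pd a (fun y => f y * g y) x = f x * pd a g x + pd a f x * g x := by
  unfold pd
  rw [fderiv_fun_mul hf hg]
  simp [mul_comm]

lemma pd_sub (hf : DifferentiableAt ℝ f x) (hg : DifferentiableAt ℝ g x) :
    pd a (fun y => f y - g y) x = pd a f x - pd a g x := by
  unfold pd
  rw [fderiv_fun_sub hf hg]; simp

lemma pd_add (hf : DifferentiableAt ℝ f x) (hg : DifferentiableAt ℝ g x) :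
    pd a (fun y => f y + g y) x = pd a f x + pd a g x := by
  unfold pd
  rw [fderiv_fun_add hf hg]; simp

lemma pd_div (hf : DifferentiableAt ℝ f x) (hg : DifferentiableAt ℝ g x)
    (hx : g x ≠ 0) :
    pd a (fun y => f y / g y) x = (pd a f x * g x - f x * pd a g x) / (g x) ^ 2 := by
  have hinv : HasFDerivAt (fun y => (g y)⁻¹) ((-((g x) ^ 2)⁻¹) • fderiv ℝ g x) x :=
    (hasDerivAt_inv hx).comp_hasFDerivAt x hg.hasFDerivAt
  have hmul := hf.hasFDerivAt.mul hinv
  have : (fun y => f y / g y) = fun y => f y * (g y)⁻¹ := by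
    funext y; rw [div_eq_mul_inv]
  rw [this]
  unfold pd
  rw [show (fun y => f y * (g y)⁻¹) = f * (fun y => (g y)⁻¹) from rfl, hmul.fderiv]
  simp only [ContinuousLinearMap.add_apply, ContinuousLinearMap.smul_apply, smul_eq_mul]
  field_simp
  ring

lemma pb_expand (P : Fin n → Fin n → (Fin n → ℝ) → ℝ) (f g : (Fin n → ℝ) → ℝ)
    (x : Fin n → ℝ) :
    pb P f g x = ∑ a : Fin n, pd a f x * (∑ b : Fin n, P a b x * pd b g x) := by
  unfold pb
  refine Finset.sum_congr rfl (fun a _ => ?_)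
  rw [Finset.mul_sum]
  exact Finset.sum_congr rfl (fun b _ => by ring)

lemma pb_antisymm (P : Fin n → Fin n → (Fin n → ℝ) → ℝ) (f : (Fin n → ℝ) → ℝ)
    (x : Fin n → ℝ) (hP : ∀ a b, P a b x = -(P b a x)) : pb P f f x = 0 := by
  have h : pb P f f x = -(pb P f f x) := by
    calc pb P f f x = ∑ a : Fin n, ∑ b : Fin n, P a b x * pd a f x * pd b f x := rfl
      _ = ∑ a : Fin n, ∑ b : Fin n, -(P b a x * pd b f x * pd a f x) := by
          refine Finset.sum_congr rfl (fun a _ => Finset.sum_congr rfl (fun b _ => ?_))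
          rw [hP a b]; ring
      _ = -(∑ b : Fin n, ∑ a : Fin n, P b a x * pd b f x * pd a f x) := by
          rw [Finset.sum_comm]; simp
      _ = -(pb P f f x) := rfl
  linarith
end basic

/-! ### Derivatives of the `Lfun` -/

section L
variable {m j : ℕ} {y : Fin (2*m-2) → ℝ}

lemma pd_Lfun (hD : get y (j+1) * get y ((m-2)+(m-j-1)) + get y 1 * get y 0 ≠ 0)
    (a : Fin (2*m-2)) :
    pd a (Lfun m j) y =
      ((((if (a:ℕ) = j+1 then 1 else 0) * get y ((m-2)+(m-j))
          + get y (j+1) * (if (a:ℕ) = (m-2)+(m-j) then 1 else 0))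
        - ((if (a:ℕ) = 1 then 1 else 0) * get y 0
          + get y 1 * (if (a:ℕ) = 0 then 1 else 0)))
        * (get y (j+1) * get y ((m-2)+(m-j-1)) + get y 1 * get y 0)
      - (get y (j+1) * get y ((m-2)+(m-j)) - get y 1 * get y 0)
        * (((if (a:ℕ) = j+1 then 1 else 0) * get y ((m-2)+(m-j-1))
          + get y (j+1) * (if (a:ℕ) = (m-2)+(m-j-1) then 1 else 0))
        + ((if (a:ℕ) = 1 then 1 else 0) * get y 0
          + get y 1 * (if (a:ℕ) = 0 then 1 else 0))))
      / (get y (j+1) * get y ((m-2)+(m-j-1)) + get y 1 * get y 0) ^ 2 := by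
  have d1 : DifferentiableAt ℝ
      (fun y : Fin (2*m-2) → ℝ => get y (j+1) * get y ((m-2)+(m-j))) y :=
    (diffAt_get _ _).mul (diffAt_get _ _)
  have d2 : DifferentiableAt ℝ
      (fun y : Fin (2*m-2) → ℝ => get y 1 * get y 0) y :=
    (diffAt_get _ _).mul (diffAt_get _ _)
  have d3 : DifferentiableAt ℝ
      (fun y : Fin (2*m-2) → ℝ => get y (j+1) * get y ((m-2)+(m-j-1))) y :=
    (diffAt_get _ _).mul (diffAt_get _ _)
  have dN : DifferentiableAt ℝ
      (fun y : Fin (2*m-2) → ℝ =>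
        get y (j+1) * get y ((m-2)+(m-j)) - get y 1 * get y 0) y := d1.sub d2
  have dD : DifferentiableAt ℝ
      (fun y : Fin (2*m-2) → ℝ =>
        get y (j+1) * get y ((m-2)+(m-j-1)) + get y 1 * get y 0) y := d3.add d2
  unfold Lfun
  rw [pd_div dN dD hD, pd_sub d1 d2, pd_add d3 d2,
    pd_mul (diffAt_get _ _) (diffAt_get _ _), pd_mul (diffAt_get _ _) (diffAt_get _ _),
    pd_mul (diffAt_get _ _) (diffAt_get _ _)]
  simp only [pd_get]
  ring

lemma pd_Lfun_zero (hD : get y (j+1) * get y ((m-2)+(m-j-1)) + get y 1 * get y 0 ≠ 0)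
    {a : Fin (2*m-2)} (h0 : (a:ℕ) ≠ 0) (h1 : (a:ℕ) ≠ 1) (h2 : (a:ℕ) ≠ j+1)
    (h3 : (a:ℕ) ≠ (m-2)+(m-j)) (h4 : (a:ℕ) ≠ (m-2)+(m-j-1)) :
    pd a (Lfun m j) y = 0 := by
  rw [pd_Lfun hD a, if_neg h2, if_neg h3, if_neg h1, if_neg h0, if_neg h4]
  ring

lemma pd_Lfun_G1 (hm : 4 ≤ m) (hj1 : 1 ≤ j) (hj : j ≤ m-3)
    (hD : get y (j+1) * get y ((m-2)+(m-j-1)) + get y 1 * get y 0 ≠ 0)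
    {a : Fin (2*m-2)} (ha : (a:ℕ) = (m-2)+(m-j)) :
    pd a (Lfun m j) y =
      (get y (j+1) * (get y (j+1) * get y ((m-2)+(m-j-1)) + get y 1 * get y 0))
        / (get y (j+1) * get y ((m-2)+(m-j-1)) + get y 1 * get y 0)^2 := by
  rw [pd_Lfun hD a, if_neg (by omega), if_pos (by omega), if_neg (by omega),
    if_neg (by omega), if_neg (by omega)]
  ring

lemma pd_Lfun_G2 (hm : 4 ≤ m) (hj1 : 1 ≤ j) (hj : j ≤ m-3)
    (hD : get y (j+1) * get y ((m-2)+(m-j-1)) + get y 1 * get y 0 ≠ 0)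
    {a : Fin (2*m-2)} (ha : (a:ℕ) = (m-2)+(m-j-1)) :
    pd a (Lfun m j) y =
      -((get y (j+1) * get y ((m-2)+(m-j)) - get y 1 * get y 0) * get y (j+1))
        / (get y (j+1) * get y ((m-2)+(m-j-1)) + get y 1 * get y 0)^2 := by
  rw [pd_Lfun hD a, if_neg (by omega), if_neg (by omega), if_neg (by omega),
    if_neg (by omega), if_pos (by omega)]
  ring
end L
section K
variable {m : ℕ} {y : Fin (2*m-2) → ℝ}

/-- Normal form of `poFG` when `κ ≥ 0`, with range-products. -/
lemma poFG_eval {a b : ℕ} (h : m + 1 ≤ a + b) :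
    poFG m a b y =
      -((∏ l ∈ Finset.range ((a+b-(m+1))+1),
          (get y (a-(a+b-(m+1))+l) * get y ((m-2)+(b-l)) - get y 1 * get y 0)) /
        (∏ l ∈ Finset.range (a+b-(m+1)),
          (get y (a-(a+b-(m+1))+l) * get y ((m-2)+(b-(l+1))) + get y 1 * get y 0))) := by
  unfold poFG
  rw [if_neg (by omega)]
  congr 1
  congr 1
  rw [← Finset.Ico_add_one_right_eq_Icc, Finset.prod_Ico_eq_prod_range]
  rw [Nat.add_sub_cancel]
  refine Finset.prod_congr rfl (fun l _ => ?_)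
  rw [show a-(a+b-(m+1))+(1+l)-1 = a-(a+b-(m+1))+l from by omega,
    show b - (1+l) = b - (l+1) from by omega]
end K

/-- The crucial computation: the bracket of `F_a` with `L_j`, given via the two
`G`-partial derivatives of `L_j`. -/
lemma key (hm : 4 ≤ m)
    (hden : ∀ a b : ℕ, 2 ≤ a → a ≤ m-1 → 2 ≤ b → b ≤ m-1 →
      get y a * get y ((m-2)+b) + get y 1 * get y 0 ≠ 0)
    {a j : ℕ} (ha2 : 2 ≤ a) (ham : a ≤ m-1) (hj1 : 1 ≤ j) (hj : j ≤ m-3) :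
    poFG m a (m-j) y *
        ((get y (j+1) * (get y (j+1) * get y ((m-2)+(m-j-1)) + get y 1 * get y 0))
          / (get y (j+1) * get y ((m-2)+(m-j-1)) + get y 1 * get y 0)^2)
      + poFG m a (m-j-1) y *
        (-((get y (j+1) * get y ((m-2)+(m-j)) - get y 1 * get y 0) * get y (j+1))
          / (get y (j+1) * get y ((m-2)+(m-j-1)) + get y 1 * get y 0)^2)
      = if a = j+1 then
          -(get y (j+1) *
            ((get y (j+1) * get y ((m-2)+(m-j)) - get y 1 * get y 0) /
             (get y (j+1) * get y ((m-2)+(m-j-1)) + get y 1 * get y 0)))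
        else 0 := by
  set F := get y (j+1) with hF
  set G1 := get y ((m-2)+(m-j)) with hG1
  set G2 := get y ((m-2)+(m-j-1)) with hG2
  set c := get y 1 * get y 0 with hc
  have hD : F * G2 + c ≠ 0 := hden (j+1) (m-j-1) (by omega) (by omega) (by omega) (by omega)
  rcases lt_trichotomy a (j+1) with hlt | heq | hgt
  · -- a ≤ j : both brackets vanish
    rw [if_neg (by omega)]
    unfold poFG
    rw [if_pos (by omega), if_pos (by omega)]
    ring
  · -- a = j+1
    subst heq
    rw [if_pos rfl]
    have h2 : poFG m (j+1) (m-j-1) y = 0 := by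
      unfold poFG; rw [if_pos (by omega)]
    have h1 : poFG m (j+1) (m-j) y = -(F * G1 - c) := by
      unfold poFG
      rw [if_neg (by omega), show (j+1)+(m-j)-(m+1) = 0 from by omega]
      simp only [Finset.Icc_eq_empty_of_lt (by omega : (0:ℕ) < 1), Finset.prod_empty,
        zero_add, Finset.prod_range_one, Nat.sub_zero, add_zero, div_one]
      rfl
    rw [h1, h2]
    field_simp
    ring
  · -- a ≥ j+2
    rw [if_neg (by omega)]
    set k := a - j - 1 with hk
    have hk1 : 1 ≤ k := by omega
    -- normalize both poFG values
    have e1 : poFG m a (m-j) y =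
        -((∏ l ∈ Finset.range (k+1), (get y (j+1+l) * get y ((m-2)+((m-j)-l)) - c)) /
          (∏ l ∈ Finset.range k, (get y (j+1+l) * get y ((m-2)+((m-j)-(l+1))) + c))) := by
      rw [poFG_eval (by omega)]
      rw [show a+(m-j)-(m+1) = k from by omega, show a - k = j+1 from by omega]
    have e2 : poFG m a (m-j-1) y =
        -((∏ l ∈ Finset.range k, (get y (j+2+l) * get y ((m-2)+((m-j-1)-l)) - c)) /
          (∏ l ∈ Finset.range (k-1), (get y (j+2+l) * get y ((m-2)+((m-j-1)-(l+1))) + c))) := by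
      rw [poFG_eval (by omega)]
      rw [show a+(m-j-1)-(m+1) = k-1 from by omega, show a - (k-1) = j+2 from by omega,
        show k-1+1 = k from by omega]
    -- relate the numerators
    have hP : (∏ l ∈ Finset.range (k+1), (get y (j+1+l) * get y ((m-2)+((m-j)-l)) - c))
        = (∏ l ∈ Finset.range k, (get y (j+2+l) * get y ((m-2)+((m-j-1)-l)) - c))
          * (F * G1 - c) := by
      rw [Finset.prod_range_succ' (fun l => get y (j+1+l) * get y ((m-2)+((m-j)-l)) - c) k]
      congr 1
      · refine Finset.prod_congr rfl (fun l _ => ?_)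
        rw [show j+1+(l+1) = j+2+l from by omega, show (m-j)-(l+1) = (m-j-1)-l from by omega]
    -- relate the denominators
    have hQ : (∏ l ∈ Finset.range k, (get y (j+1+l) * get y ((m-2)+((m-j)-(l+1))) + c))
        = (∏ l ∈ Finset.range (k-1), (get y (j+2+l) * get y ((m-2)+((m-j-1)-(l+1))) + c))
          * (F * G2 + c) := by
      rw [show k = (k-1)+1 from by omega,
        Finset.prod_range_succ' (fun l => get y (j+1+l) * get y ((m-2)+((m-j)-(l+1))) + c) (k-1)]
      congr 1
      · refine Finset.prod_congr rfl (fun l _ => ?_)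
        rw [show j+1+(l+1) = j+2+l from by omega,
          show (m-j)-(l+1+1) = (m-j-1)-(l+1) from by omega]
    have hQ2 : (∏ l ∈ Finset.range (k-1), (get y (j+2+l) * get y ((m-2)+((m-j-1)-(l+1))) + c))
        ≠ 0 := by
      rw [Finset.prod_ne_zero_iff]
      intro l hl
      rw [Finset.mem_range] at hl
      exact hden (j+2+l) ((m-j-1)-(l+1)) (by omega) (by omega) (by omega) (by omega)
    rw [e1, e2, hP, hQ]
    set P2 := ∏ l ∈ Finset.range k, (get y (j+2+l) * get y ((m-2)+((m-j-1)-l)) - c) with hP2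
    set Q2 := ∏ l ∈ Finset.range (k-1), (get y (j+2+l) * get y ((m-2)+((m-j-1)-(l+1))) + c)
    field_simp
    ring

/-! ### Row computations for the structure matrix -/

section rows
variable {m : ℕ} {y : Fin (2*m-2) → ℝ}

/-- Rows `0` and `1` (the Casimirs `H`, `C`) of `Podd` vanish. -/
lemma Podd_row_casimir (hm : 4 ≤ m) {a : Fin (2*m-2)} (ha : (a:ℕ) < 2) (b : Fin (2*m-2)) :
    Podd m a b y = 0 := by
  unfold Podd
  rw [if_neg (by omega), if_neg (by omega)]

lemma Podd_antisymm (hm : 4 ≤ m) (a b : Fin (2*m-2)) :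
    Podd m a b y = -(Podd m b a y) := by
  unfold Podd
  split_ifs <;> first | (exfalso; omega) | ring

/-- The inner sum over a row indexed by an `F`-variable. -/
lemma row_F (hm : 4 ≤ m)
    (hden : ∀ a b : ℕ, 2 ≤ a → a ≤ m-1 → 2 ≤ b → b ≤ m-1 →
      get y a * get y ((m-2)+b) + get y 1 * get y 0 ≠ 0)
    {j : ℕ} (hj1 : 1 ≤ j) (hj : j ≤ m-3)
    {a : Fin (2*m-2)} (ha2 : 2 ≤ (a:ℕ)) (ham : (a:ℕ) ≤ m-1) :
    (∑ b : Fin (2*m-2), Podd m a b y * pd b (Lfun m j) y)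
      = if (a:ℕ) = j+1 then -(get y (j+1) * Lfun m j y) else 0 := by
  have hD : get y (j+1) * get y ((m-2)+(m-j-1)) + get y 1 * get y 0 ≠ 0 :=
    hden (j+1) (m-j-1) (by omega) (by omega) (by omega) (by omega)
  have hb1lt : (m-2)+(m-j) < 2*m-2 := by omega
  have hb2lt : (m-2)+(m-j-1) < 2*m-2 := by omega
  set b1 : Fin (2*m-2) := ⟨(m-2)+(m-j), hb1lt⟩ with hb1
  set b2 : Fin (2*m-2) := ⟨(m-2)+(m-j-1), hb2lt⟩ with hb2
  have hsum : (∑ b : Fin (2*m-2), Podd m a b y * pd b (Lfun m j) y)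
      = ∑ b ∈ ({b1, b2} : Finset (Fin (2*m-2))), Podd m a b y * pd b (Lfun m j) y := by
    symm
    refine Finset.sum_subset (Finset.subset_univ _) (fun b _ hb => ?_)
    simp only [Finset.mem_insert, Finset.mem_singleton] at hb
    push_neg at hb
    obtain ⟨hbb1, hbb2⟩ := hb
    by_cases hbm : m ≤ (b:ℕ)
    · have h1 : (b:ℕ) ≠ (m-2)+(m-j) := fun hc => hbb1 (Fin.ext hc)
      have h2 : (b:ℕ) ≠ (m-2)+(m-j-1) := fun hc => hbb2 (Fin.ext hc)
      rw [pd_Lfun_zero hD (by omega) (by omega) (by omega) h1 h2]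
      ring
    · have : Podd m a b y = 0 := by
        unfold Podd
        rw [if_neg (by omega), if_neg (by omega)]
      rw [this]; ring
  have hne : b1 ≠ b2 := by
    intro hc
    have := Fin.ext_iff.mp hc
    simp only [hb1, hb2] at this
    omega
  rw [hsum, Finset.sum_pair hne]
  have hP1 : Podd m a b1 y = poFG m (a:ℕ) (m-j) y := by
    unfold Podd
    rw [if_pos ⟨ha2, ham, by simp only [hb1]; omega⟩]
    congr 1
    simp only [hb1]
    omega
  have hP2 : Podd m a b2 y = poFG m (a:ℕ) (m-j-1) y := by
    unfold Podd
    rw [if_pos ⟨ha2, ham, by simp only [hb2]; omega⟩]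
    congr 1
    simp only [hb2]
    omega
  rw [hP1, hP2, pd_Lfun_G1 hm hj1 hj hD (by simp [hb1]), pd_Lfun_G2 hm hj1 hj hD (by simp [hb2])]
  have := key (y := y) hm hden ha2 ham hj1 hj
  rw [this]
  unfold Lfun
  rfl

/-- The inner sum over a row indexed by a `G`-variable. -/
lemma row_G (hm : 4 ≤ m)
    (hden : ∀ a b : ℕ, 2 ≤ a → a ≤ m-1 → 2 ≤ b → b ≤ m-1 →
      get y a * get y ((m-2)+b) + get y 1 * get y 0 ≠ 0)
    {j : ℕ} (hj1 : 1 ≤ j) (hj : j ≤ m-3)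
    {a : Fin (2*m-2)} (ham : m ≤ (a:ℕ)) :
    (∑ b : Fin (2*m-2), Podd m a b y * pd b (Lfun m j) y)
      = -(poFG m (j+1) ((a:ℕ)-(m-2)) y)
          * pd (⟨j+1, by omega⟩ : Fin (2*m-2)) (Lfun m j) y := by
  have hD : get y (j+1) * get y ((m-2)+(m-j-1)) + get y 1 * get y 0 ≠ 0 :=
    hden (j+1) (m-j-1) (by omega) (by omega) (by omega) (by omega)
  set bj : Fin (2*m-2) := ⟨j+1, by omega⟩ with hbj
  have hP : Podd m a bj y = -(poFG m (j+1) ((a:ℕ)-(m-2)) y) := by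
    unfold Podd
    rw [if_neg (by simp only [hbj]; omega), if_pos ⟨by simp only [hbj]; omega, by simp only [hbj]; omega, ham⟩]
  rw [← hP]
  refine Finset.sum_eq_single_of_mem bj (Finset.mem_univ _) (fun b _ hb => ?_)
  by_cases hbm : m ≤ (b:ℕ)
  · have : Podd m a b y = 0 := by
      unfold Podd
      rw [if_neg (by omega), if_neg (by omega)]
    rw [this]; ring
  · by_cases hb2 : 2 ≤ (b:ℕ)
    · have hne : (b:ℕ) ≠ j+1 := fun hc => hb (Fin.ext hc)
      rw [pd_Lfun_zero hD (by omega) (by omega) hne (by omega) (by omega)]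
      ring
    · have : Podd m a b y = 0 := by
        unfold Podd
        rw [if_neg (by omega), if_neg (by omega)]
      rw [this]; ring
end rows

/-- In the odd-case algebra of integrals, the functions `L_i` pairwise commute,
and the only non-vanishing brackets between the `F`'s and the `L`'s are
`{F_{j+1}, L_j} = -F_{j+1} L_j`, `j = 1,…,m-3`. -/
theorem odd_L_brackets (m : ℕ) (hm : 4 ≤ m) (y : Fin (2*m-2) → ℝ)
    (hden : ∀ a b : ℕ, 2 ≤ a → a ≤ m-1 → 2 ≤ b → b ≤ m-1 →
      get y a * get y ((m-2)+b) + get y 1 * get y 0 ≠ 0) :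
    (∀ i j : ℕ, 1 ≤ i → i ≤ m-3 → 1 ≤ j → j ≤ m-3 →
      pb (Podd m) (Lfun m i) (Lfun m j) y = 0) ∧
    (∀ j : ℕ, 1 ≤ j → j ≤ m-3 →
      pb (Podd m) (fun y => get y (j+1)) (Lfun m j) y
        = -(get y (j+1) * Lfun m j y)) ∧
    (∀ i j : ℕ, 2 ≤ i → i ≤ m-1 → 1 ≤ j → j ≤ m-3 → i ≠ j+1 →
      pb (Podd m) (fun y => get y i) (Lfun m j) y = 0) := by
  have main : ∀ i j : ℕ, 2 ≤ i → i ≤ m-1 → 1 ≤ j → j ≤ m-3 →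
      pb (Podd m) (fun y => get y i) (Lfun m j) y
        = if i = j+1 then -(get y (j+1) * Lfun m j y) else 0 := by
    intro i j hi2 him hj1 hj
    rw [pb_expand]
    have hi : i < 2*m-2 := by omega
    rw [Finset.sum_eq_single_of_mem (⟨i, hi⟩ : Fin (2*m-2)) (Finset.mem_univ _)
      (fun b _ hb => by rw [pd_get, if_neg (fun hc => hb (Fin.ext hc)), zero_mul])]
    rw [pd_get, if_pos rfl, one_mul, row_F hm hden hj1 hj hi2 him]
  refine ⟨?_, ?_, ?_⟩
  · -- {L_i, L_j} = 0
    intro i j hi1 hi hj1 hj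
    by_cases hij : i = j
    · subst hij
      exact pb_antisymm _ _ _ (Podd_antisymm hm)
    have hDj : get y (j+1) * get y ((m-2)+(m-j-1)) + get y 1 * get y 0 ≠ 0 :=
      hden (j+1) (m-j-1) (by omega) (by omega) (by omega) (by omega)
    have hDi : get y (i+1) * get y ((m-2)+(m-i-1)) + get y 1 * get y 0 ≠ 0 :=
      hden (i+1) (m-i-1) (by omega) (by omega) (by omega) (by omega)
    rw [pb_expand]
    obtain ⟨ai, hai⟩ : ∃ a : Fin (2*m-2), (a:ℕ) = i+1 := ⟨⟨i+1, by omega⟩, rfl⟩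
    obtain ⟨g1, hg1⟩ : ∃ a : Fin (2*m-2), (a:ℕ) = (m-2)+(m-i) := ⟨⟨(m-2)+(m-i), by omega⟩, rfl⟩
    obtain ⟨g2, hg2⟩ : ∃ a : Fin (2*m-2), (a:ℕ) = (m-2)+(m-i-1) := ⟨⟨(m-2)+(m-i-1), by omega⟩, rfl⟩
    have hsub : (∑ a : Fin (2*m-2), pd a (Lfun m i) y
          * (∑ b : Fin (2*m-2), Podd m a b y * pd b (Lfun m j) y))
        = ∑ a ∈ ({ai, g1, g2} : Finset (Fin (2*m-2))), pd a (Lfun m i) y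
          * (∑ b : Fin (2*m-2), Podd m a b y * pd b (Lfun m j) y) := by
      symm
      refine Finset.sum_subset (Finset.subset_univ _) (fun a _ ha => ?_)
      simp only [Finset.mem_insert, Finset.mem_singleton] at ha
      push_neg at ha
      obtain ⟨h1, h2, h3⟩ := ha
      by_cases h0 : (a:ℕ) < 2
      · have : (∑ b : Fin (2*m-2), Podd m a b y * pd b (Lfun m j) y) = 0 :=
          Finset.sum_eq_zero (fun b _ => by rw [Podd_row_casimir hm h0 b, zero_mul])
        rw [this, mul_zero]
      · rw [pd_Lfun_zero hDi (by omega) (by omega)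
          (fun hc => h1 (Fin.ext (hc.trans hai.symm))) (fun hc => h2 (Fin.ext (hc.trans hg1.symm)))
          (fun hc => h3 (Fin.ext (hc.trans hg2.symm))), zero_mul]
    rw [hsub]
    have hne12 : ai ∉ ({g1, g2} : Finset (Fin (2*m-2))) := by
      simp only [Finset.mem_insert, Finset.mem_singleton, Fin.ext_iff]
      omega
    have hne23 : g1 ∉ ({g2} : Finset (Fin (2*m-2))) := by
      simp only [Finset.mem_singleton, Fin.ext_iff]
      omega
    rw [Finset.sum_insert hne12, Finset.sum_insert hne23, Finset.sum_singleton]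
    have hrow1 : (∑ b : Fin (2*m-2), Podd m ai b y * pd b (Lfun m j) y) = 0 := by
      rw [row_F hm hden hj1 hj (by omega) (by omega)]
      rw [if_neg (by omega)]
    have hrowg1 := row_G (y := y) hm hden hj1 hj (a := g1) (by omega)
    have hrowg2 := row_G (y := y) hm hden hj1 hj (a := g2) (by omega)
    rw [hrow1, mul_zero, hrowg1, hrowg2,
      show ((g1:ℕ)-(m-2) : ℕ) = m-i from by omega,
      show ((g2:ℕ)-(m-2) : ℕ) = m-i-1 from by omega,
      pd_Lfun_G1 hm hi1 hi hDi hg1,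
      pd_Lfun_G2 hm hi1 hi hDi hg2]
    have hkey := key (y := y) hm hden (a := j+1) (j := i)
      (by omega) (by omega) hi1 hi
    rw [if_neg (by omega)] at hkey
    linear_combination (-(pd (⟨j+1, by omega⟩ : Fin (2*m-2)) (Lfun m j) y)) * hkey
  · -- {F_{j+1}, L_j} = -F_{j+1} L_j
    intro j hj1 hj
    rw [main (j+1) j (by omega) (by omega) hj1 hj, if_pos rfl]
  · -- {F_i, L_j} = 0 for i ≠ j+1
    intro i j hi2 him hj1 hj hij
    rw [main i j hi2 him hj1 hj, if_neg hij]
end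

section
/- In the abstract Poisson algebra on (H, F_1, F_2, F_3, G_1, G_2, G_3) for n=8 (m=4) with {F_i,G_j} given by the even-case formulas, the functions F̃_1 = F_3 − F_1 G_1/G_3, F̃_2 = F_2 − F_1 G_2/G_3, G̃_1 = G_1/G_3, G̃_2 = G_2/G_3 all Poisson-commute with both F_1 and G_3. -/
/- Abstract even-case algebra of integrals: `2m-1` independent variables,
coordinate `0` is `H`, coordinates `1,…,m-1` are `F_1,…,F_{m-1}` and
coordinates `m,…,2m-2` are `G_1,…,G_{m-1}` (`G_j` at index `(m-1)+j`). -/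

/-- The value of the bracket `{F_i, G_j}`:
`-F_i G_j` if `κ(i,j) = i+j-m-1 < 0`, and `-F_{m-j} G_{m-i}` otherwise. -/
noncomputable def peFG (m i j : ℕ) (y : Fin (2*m-1) → ℝ) : ℝ :=
  if i + j < m + 1 then -(get y i * get y ((m-1)+j))
  else -(get y (m-j) * get y ((m-1)+(m-i)))

/-- The even-case structure matrix: `{H,·} = 0`, `{F_i,F_j} = {G_i,G_j} = 0`, and
`{F_i,G_j}` as in `peFG`, extended antisymmetrically. -/
noncomputable def Pe (m : ℕ) : Fin (2*m-1) → Fin (2*m-1) → (Fin (2*m-1) → ℝ) → ℝ :=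
  fun a b y =>
    if 1 ≤ (a:ℕ) ∧ (a:ℕ) ≤ m-1 ∧ m ≤ (b:ℕ) then peFG m (a:ℕ) ((b:ℕ)-(m-1)) y
    else if 1 ≤ (b:ℕ) ∧ (b:ℕ) ≤ m-1 ∧ m ≤ (a:ℕ) then -(peFG m (b:ℕ) ((a:ℕ)-(m-1)) y)
    else 0

/- The case `n = 8`, `m = 4`: variables `(H, F_1, F_2, F_3, G_1, G_2, G_3)` at
indices `(0, 1, 2, 3, 4, 5, 6)`. -/

noncomputable def Ft1 : (Fin (2*4-1) → ℝ) → ℝ := fun y => get y 3 - get y 1 * get y 4 / get y 6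
noncomputable def Ft2 : (Fin (2*4-1) → ℝ) → ℝ := fun y => get y 2 - get y 1 * get y 5 / get y 6
noncomputable def Gt1 : (Fin (2*4-1) → ℝ) → ℝ := fun y => get y 4 / get y 6
noncomputable def Gt2 : (Fin (2*4-1) → ℝ) → ℝ := fun y => get y 5 / get y 6


section Aux

/-- Convenient constructor for indices in `Fin (2*4-1)`. -/
def e (k : ℕ) (h : k < 2*4-1 := by norm_num) : Fin (2*4-1) := ⟨k, h⟩

lemma get_eq (y : Fin (2*4-1) → ℝ) (k : ℕ) (h : k < 2*4-1) : get y k = y ⟨k, h⟩ := by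
  unfold _root_.get; rw [dif_pos h]

lemma e_val (k : ℕ) (h : k < 2*4-1) : ((e k h : Fin (2*4-1)) : ℕ) = k := rfl

lemma get_e (y : Fin (2*4-1) → ℝ) (k : ℕ) (h : k < 2*4-1) : get y k = y (e k h) :=
  get_eq y k h

/-- Kronecker delta on `Fin (2*4-1)`. -/
noncomputable def δ (k i : Fin (2*4-1)) : ℝ := if k = i then 1 else 0

lemma δ_e (a b : ℕ) (ha : a < 2*4-1) (hb : b < 2*4-1) :
    δ (e a ha) (e b hb) = if a = b then 1 else 0 := by
  simp [δ, e, Fin.ext_iff]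

lemma pd_coord (i k : Fin (2*4-1)) (x : Fin (2*4-1) → ℝ) :
    pd i (fun y => y k) x = δ k i := by
  unfold pd
  rw [(hasFDerivAt_apply (𝕜 := ℝ) k x).fderiv]
  simp [δ, Pi.single_apply]

lemma F1_fun : (fun y : Fin (2*4-1) → ℝ => get y 1) = fun y => y (e 1) := by
  funext y; exact get_e y 1 (by norm_num)

lemma G3_fun : (fun y : Fin (2*4-1) → ℝ => get y 6) = fun y => y (e 6) := by
  funext y; exact get_e y 6 (by norm_num)

lemma Ft1_eq : Ft1 = fun y => y (e 3) - y (e 1) * y (e 4) * (y (e 6))⁻¹ := by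
  funext y
  unfold Ft1
  rw [get_eq y 3 (by norm_num), get_eq y 1 (by norm_num), get_eq y 4 (by norm_num),
    get_eq y 6 (by norm_num), div_eq_mul_inv]
  rfl

lemma Ft2_eq : Ft2 = fun y => y (e 2) - y (e 1) * y (e 5) * (y (e 6))⁻¹ := by
  funext y
  unfold Ft2
  rw [get_eq y 2 (by norm_num), get_eq y 1 (by norm_num), get_eq y 5 (by norm_num),
    get_eq y 6 (by norm_num), div_eq_mul_inv]
  rfl

lemma Gt1_eq : Gt1 = fun y => y (e 4) * (y (e 6))⁻¹ := by
  funext y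
  unfold Gt1
  rw [get_eq y 4 (by norm_num), get_eq y 6 (by norm_num), div_eq_mul_inv]
  rfl

lemma Gt2_eq : Gt2 = fun y => y (e 5) * (y (e 6))⁻¹ := by
  funext y
  unfold Gt2
  rw [get_eq y 5 (by norm_num), get_eq y 6 (by norm_num), div_eq_mul_inv]
  rfl

lemma pd_Ft1 (i : Fin (2*4-1)) (x : Fin (2*4-1) → ℝ) (h : x (e 6) ≠ 0) :
    pd i Ft1 x = δ (e 3) i - (x (e 4) * δ (e 1) i + x (e 1) * δ (e 4) i) * (x (e 6))⁻¹
      + x (e 1) * x (e 4) * (x (e 6)^2)⁻¹ * δ (e 6) i := by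
  have h3 := hasFDerivAt_apply (𝕜 := ℝ) (e 3) x
  have h1 := hasFDerivAt_apply (𝕜 := ℝ) (e 1) x
  have h4 := hasFDerivAt_apply (𝕜 := ℝ) (e 4) x
  have h6 := hasFDerivAt_apply (𝕜 := ℝ) (e 6) x
  have hinv := (hasDerivAt_inv h).comp_hasFDerivAt x h6
  simp only [Function.comp_def] at hinv
  have H := (h3.sub ((h1.mul h4).mul hinv)).fderiv
  rw [Ft1_eq]
  unfold pd
  simp only [Pi.sub_def, Pi.mul_def] at H
  rw [H]
  simp [δ, Pi.single_apply]
  split_ifs <;> ring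

lemma pd_Ft2 (i : Fin (2*4-1)) (x : Fin (2*4-1) → ℝ) (h : x (e 6) ≠ 0) :
    pd i Ft2 x = δ (e 2) i - (x (e 5) * δ (e 1) i + x (e 1) * δ (e 5) i) * (x (e 6))⁻¹
      + x (e 1) * x (e 5) * (x (e 6)^2)⁻¹ * δ (e 6) i := by
  have h2 := hasFDerivAt_apply (𝕜 := ℝ) (e 2) x
  have h1 := hasFDerivAt_apply (𝕜 := ℝ) (e 1) x
  have h5 := hasFDerivAt_apply (𝕜 := ℝ) (e 5) x
  have h6 := hasFDerivAt_apply (𝕜 := ℝ) (e 6) x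
  have hinv := (hasDerivAt_inv h).comp_hasFDerivAt x h6
  simp only [Function.comp_def] at hinv
  have H := (h2.sub ((h1.mul h5).mul hinv)).fderiv
  rw [Ft2_eq]
  unfold pd
  simp only [Pi.sub_def, Pi.mul_def] at H
  rw [H]
  simp [δ, Pi.single_apply]
  split_ifs <;> ring

lemma pd_Gt1 (i : Fin (2*4-1)) (x : Fin (2*4-1) → ℝ) (h : x (e 6) ≠ 0) :
    pd i Gt1 x = δ (e 4) i * (x (e 6))⁻¹ - x (e 4) * (x (e 6)^2)⁻¹ * δ (e 6) i := by
  have h4 := hasFDerivAt_apply (𝕜 := ℝ) (e 4) x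
  have h6 := hasFDerivAt_apply (𝕜 := ℝ) (e 6) x
  have hinv := (hasDerivAt_inv h).comp_hasFDerivAt x h6
  simp only [Function.comp_def] at hinv
  have H := (h4.mul hinv).fderiv
  rw [Gt1_eq]
  unfold pd
  simp only [Pi.sub_def, Pi.mul_def] at H
  rw [H]
  simp [δ, Pi.single_apply]
  split_ifs <;> ring

lemma pd_Gt2 (i : Fin (2*4-1)) (x : Fin (2*4-1) → ℝ) (h : x (e 6) ≠ 0) :
    pd i Gt2 x = δ (e 5) i * (x (e 6))⁻¹ - x (e 5) * (x (e 6)^2)⁻¹ * δ (e 6) i := by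
  have h5 := hasFDerivAt_apply (𝕜 := ℝ) (e 5) x
  have h6 := hasFDerivAt_apply (𝕜 := ℝ) (e 6) x
  have hinv := (hasDerivAt_inv h).comp_hasFDerivAt x h6
  simp only [Function.comp_def] at hinv
  have H := (h5.mul hinv).fderiv
  rw [Gt2_eq]
  unfold pd
  simp only [Pi.sub_def, Pi.mul_def] at H
  rw [H]
  simp [δ, Pi.single_apply]
  split_ifs <;> ring

lemma sum7 (f : Fin (2*4-1) → ℝ) :
    ∑ i, f i = f (e 0) + f (e 1) + f (e 2) + f (e 3) + f (e 4) + f (e 5) + f (e 6) :=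
  Fin.sum_univ_seven f

end Aux

/-- For `n=8` (`m=4`), the functions `F̃_1 = F_3 - F_1G_1/G_3`,
`F̃_2 = F_2 - F_1G_2/G_3`, `G̃_1 = G_1/G_3`, `G̃_2 = G_2/G_3` all Poisson-commute
with both `F_1` and `G_3`. -/
theorem n8_commutant (y : Fin (2*4-1) → ℝ) (hG3 : get y 6 ≠ 0) :
    pb (Pe 4) (fun y => get y 1) Ft1 y = 0 ∧
    pb (Pe 4) (fun y => get y 1) Ft2 y = 0 ∧
    pb (Pe 4) (fun y => get y 1) Gt1 y = 0 ∧
    pb (Pe 4) (fun y => get y 1) Gt2 y = 0 ∧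
    pb (Pe 4) (fun y => get y 6) Ft1 y = 0 ∧
    pb (Pe 4) (fun y => get y 6) Ft2 y = 0 ∧
    pb (Pe 4) (fun y => get y 6) Gt1 y = 0 ∧
    pb (Pe 4) (fun y => get y 6) Gt2 y = 0 := by
  have hy6 : y (e 6) ≠ 0 := by rwa [get_e y 6 (by norm_num)] at hG3
  refine ⟨?_, ?_, ?_, ?_, ?_, ?_, ?_, ?_⟩ <;>
  · unfold pb
    simp only [sum7, F1_fun, G3_fun, pd_coord, pd_Ft1 _ y hy6, pd_Ft2 _ y hy6,
      pd_Gt1 _ y hy6, pd_Gt2 _ y hy6, δ_e]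
    norm_num [Pe, peFG, e_val, get_e]
    try field_simp [hy6]
    try ring
end
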